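/- arXiv:1002.2580 — 3 statements merged into one kernel-verified Lean document; each statement's English description precedes it below -/
import Mathlib

section
/- Let G be a finite simple graph, h : V(G) → ℝ, and let P be a local-minimum plateau of h. Let c be any real number with h(P) < c < h(u) for every vertex u outside P adjacent to P, where h(P) is the common height of P. Define h' by h'(v) = c for v ∈ P and h'(v) = h(v) otherwise. Then the local-minimum plateaus of h' are exactly the local-minimum plateaus of h, and the local-maximum plateaus of h' are exactly those of h. In particular locmin(h') = locmin(h) and locmax(h') = locmax(h). -/
open SimpleGraph

variable {V : Type*}

/-- A local-minimum plateau: a nonempty, connected (in the induced subgraph) set on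
which `h` is constant, all of whose outside neighbors are strictly higher. -/
def IsMinPlateau (G : SimpleGraph V) (h : V → ℝ) (P : Set V) : Prop :=
  P.Nonempty ∧ (G.induce P).Connected ∧
  (∀ u ∈ P, ∀ v ∈ P, h u = h v) ∧
  (∀ u ∉ P, ∀ v ∈ P, G.Adj u v → h v < h u)

/-- A local-maximum plateau. -/
def IsMaxPlateau (G : SimpleGraph V) (h : V → ℝ) (P : Set V) : Prop :=
  P.Nonempty ∧ (G.induce P).Connected ∧
  (∀ u ∈ P, ∀ v ∈ P, h u = h v) ∧
  (∀ u ∉ P, ∀ v ∈ P, G.Adj u v → h u < h v)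

/-- The number of local-minimum plateaus. -/
noncomputable def locmin (G : SimpleGraph V) (h : V → ℝ) : ℕ :=
  {P : Set V | IsMinPlateau G h P}.ncard

/-- The number of local-maximum plateaus. -/
noncomputable def locmax (G : SimpleGraph V) (h : V → ℝ) : ℕ :=
  {P : Set V | IsMaxPlateau G h P}.ncard

private lemma crossing {W : Type*} {H : SimpleGraph W} (p : W → Prop) :
    ∀ {a b : W}, H.Walk a b → p a → ¬ p b → ∃ x y, H.Adj x y ∧ p x ∧ ¬ p y := by
  intro a b w
  induction w with
  | nil => intro ha hb; exact absurd ha hb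
  | @cons u v c huv w ih =>
    intro ha hb
    by_cases hv : p v
    · exact ih hv hb
    · exact ⟨_, _, huv, ha, hv⟩

/-- If a connected constant set meets a min plateau, it is contained in it. -/
private lemma min_subset {G : SimpleGraph V} {h : V → ℝ} {Q S : Set V}
    (hQ : IsMinPlateau G h Q) (hcon : (G.induce S).Connected)
    (hconst : ∀ u ∈ S, ∀ v ∈ S, h u = h v) (hmeet : (S ∩ Q).Nonempty) : S ⊆ Q := by
  obtain ⟨a, haS, haQ⟩ := hmeet
  intro b hbS
  by_contra hbQ
  obtain ⟨w⟩ := hcon.preconnected ⟨a, haS⟩ ⟨b, hbS⟩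
  obtain ⟨x, y, hadj, hx, hy⟩ := crossing (fun z : S => (z : V) ∈ Q) w haQ hbQ
  have hadj' : G.Adj (y : V) (x : V) := hadj.symm
  have h1 := hQ.2.2.2 _ hy _ hx hadj'
  exact absurd (hconst _ x.2 _ y.2) (ne_of_lt h1)

/-- If a connected constant set meets a max plateau, it is contained in it. -/
private lemma max_subset {G : SimpleGraph V} {h : V → ℝ} {Q S : Set V}
    (hQ : IsMaxPlateau G h Q) (hcon : (G.induce S).Connected)
    (hconst : ∀ u ∈ S, ∀ v ∈ S, h u = h v) (hmeet : (S ∩ Q).Nonempty) : S ⊆ Q := by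
  obtain ⟨a, haS, haQ⟩ := hmeet
  intro b hbS
  by_contra hbQ
  obtain ⟨w⟩ := hcon.preconnected ⟨a, haS⟩ ⟨b, hbS⟩
  obtain ⟨x, y, hadj, hx, hy⟩ := crossing (fun z : S => (z : V) ∈ Q) w haQ hbQ
  have hadj' : G.Adj (y : V) (x : V) := hadj.symm
  have h1 := hQ.2.2.2 _ hy _ hx hadj'
  exact absurd (hconst _ y.2 _ x.2) (ne_of_lt h1)

/-- If a set has no outside neighbors and `Q` is connected and meets it, then `Q ⊆ P`. -/
private lemma subset_of_no_boundary {G : SimpleGraph V} {Q P : Set V}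
    (hcon : (G.induce Q).Connected)
    (hnb : ∀ u ∉ P, ∀ v ∈ P, ¬ G.Adj u v)
    (hmeet : (Q ∩ P).Nonempty) : Q ⊆ P := by
  obtain ⟨a, haQ, haP⟩ := hmeet
  intro b hbQ
  by_contra hbP
  obtain ⟨w⟩ := hcon.preconnected ⟨a, haQ⟩ ⟨b, hbQ⟩
  obtain ⟨x, y, hadj, hx, hy⟩ := crossing (fun z : Q => (z : V) ∈ P) w haP hbP
  exact hnb _ hy _ hx (G.adj_symm hadj)

open Classical in
private lemma min_iff (G : SimpleGraph V) (h : V → ℝ) (P : Set V)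
    (hP : IsMinPlateau G h P) (c : ℝ)
    (hc1 : ∀ v ∈ P, h v < c)
    (hc2 : ∀ u ∉ P, (∃ v ∈ P, G.Adj u v) → c < h u) (Q : Set V) :
    IsMinPlateau G (fun v => if v ∈ P then c else h v) Q ↔ IsMinPlateau G h Q := by
  set h' : V → ℝ := fun v => if v ∈ P then c else h v with hh'
  have hval : ∀ v ∈ P, h' v = c := fun v hv => if_pos hv
  have hval' : ∀ v, v ∉ P → h' v = h v := fun v hv => if_neg hv
  -- P is a min plateau of h'
  have hP' : IsMinPlateau G h' P := by
    refine ⟨hP.1, hP.2.1, fun u hu v hv => by rw [hval u hu, hval v hv], ?_⟩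
    intro u hu v hv hadj
    rw [hval v hv, hval' u hu]
    exact hc2 u hu ⟨v, hv, hadj⟩
  constructor
  · intro hQ
    by_cases hmeet : (P ∩ Q).Nonempty
    · have h1 : P ⊆ Q := min_subset hQ hP.2.1 hP'.2.2.1 hmeet
      have h2 : Q ⊆ P := min_subset hP' hQ.2.1 hQ.2.2.1
        ⟨hmeet.choose, hmeet.choose_spec.2, hmeet.choose_spec.1⟩
      have : Q = P := le_antisymm h2 h1
      rw [this]; exact hP
    · -- Q disjoint from P
      have hdis : ∀ v ∈ Q, v ∉ P := fun v hvQ hvP => hmeet ⟨v, hvP, hvQ⟩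
      refine ⟨hQ.1, hQ.2.1, ?_, ?_⟩
      · intro u hu v hv
        have := hQ.2.2.1 u hu v hv
        rwa [hval' u (hdis u hu), hval' v (hdis v hv)] at this
      · intro u hu v hv hadj
        by_cases huP : u ∈ P
        · exfalso
          have h1 := hQ.2.2.2 u hu v hv hadj
          have hv' : h' v = h v := hval' v (hdis v hv)
          have hu' : h' u = c := hval u huP
          rw [hv', hu'] at h1
          exact absurd h1 (not_lt.2 (le_of_lt (hc2 v (hdis v hv) ⟨u, huP, hadj.symm⟩)))
        · have h1 := hQ.2.2.2 u hu v hv hadj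
          rwa [hval' u huP, hval' v (hdis v hv)] at h1
  · intro hQ
    by_cases hmeet : (P ∩ Q).Nonempty
    · have h1 : P ⊆ Q := min_subset hQ hP.2.1 hP.2.2.1 hmeet
      have h2 : Q ⊆ P := min_subset hP hQ.2.1 hQ.2.2.1
        ⟨hmeet.choose, hmeet.choose_spec.2, hmeet.choose_spec.1⟩
      have : Q = P := le_antisymm h2 h1
      rw [this]; exact hP'
    · have hdis : ∀ v ∈ Q, v ∉ P := fun v hvQ hvP => hmeet ⟨v, hvP, hvQ⟩
      refine ⟨hQ.1, hQ.2.1, ?_, ?_⟩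
      · intro u hu v hv
        rw [hval' u (hdis u hu), hval' v (hdis v hv)]
        exact hQ.2.2.1 u hu v hv
      · intro u hu v hv hadj
        by_cases huP : u ∈ P
        · exfalso
          have h1 := hQ.2.2.2 u hu v hv hadj
          have h2 := hP.2.2.2 v (hdis v hv) u huP hadj.symm
          exact lt_irrefl _ (h1.trans h2)
        · rw [hval' u huP, hval' v (hdis v hv)]
          exact hQ.2.2.2 u hu v hv hadj

open Classical in
private lemma max_iff (G : SimpleGraph V) (h : V → ℝ) (P : Set V)
    (hP : IsMinPlateau G h P) (c : ℝ)
    (hc1 : ∀ v ∈ P, h v < c)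
    (hc2 : ∀ u ∉ P, (∃ v ∈ P, G.Adj u v) → c < h u) (Q : Set V) :
    IsMaxPlateau G (fun v => if v ∈ P then c else h v) Q ↔ IsMaxPlateau G h Q := by
  set h' : V → ℝ := fun v => if v ∈ P then c else h v with hh'
  have hval : ∀ v ∈ P, h' v = c := fun v hv => if_pos hv
  have hval' : ∀ v, v ∉ P → h' v = h v := fun v hv => if_neg hv
  have hconstP : ∀ u ∈ P, ∀ v ∈ P, h' u = h' v := fun u hu v hv => by
    rw [hval u hu, hval v hv]
  constructor
  · intro hQ
    by_cases hmeet : (P ∩ Q).Nonempty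
    · have h1 : P ⊆ Q := max_subset hQ hP.2.1 hconstP hmeet
      -- P has no outside neighbors
      have hnb : ∀ u ∉ P, ∀ v ∈ P, ¬ G.Adj u v := by
        intro u hu v hv hadj
        have hcu : c < h u := hc2 u hu ⟨v, hv, hadj⟩
        by_cases huQ : u ∈ Q
        · have := hQ.2.2.1 u huQ v (h1 hv)
          rw [hval' u hu, hval v hv] at this
          exact lt_irrefl _ (this ▸ hcu)
        · have := hQ.2.2.2 u huQ v (h1 hv) hadj
          rw [hval' u hu, hval v hv] at this
          exact lt_irrefl _ (this.trans hcu)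
      have h2 : Q ⊆ P := subset_of_no_boundary hQ.2.1 hnb
        ⟨hmeet.choose, hmeet.choose_spec.2, hmeet.choose_spec.1⟩
      have hQP : Q = P := le_antisymm h2 h1
      subst hQP
      exact ⟨hP.1, hP.2.1, hP.2.2.1, fun u hu v hv hadj => absurd hadj (hnb u hu v hv)⟩
    · have hdis : ∀ v ∈ Q, v ∉ P := fun v hvQ hvP => hmeet ⟨v, hvP, hvQ⟩
      refine ⟨hQ.1, hQ.2.1, ?_, ?_⟩
      · intro u hu v hv
        have := hQ.2.2.1 u hu v hv
        rwa [hval' u (hdis u hu), hval' v (hdis v hv)] at this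
      · intro u hu v hv hadj
        by_cases huP : u ∈ P
        · exact (hc1 u huP).trans (hc2 v (hdis v hv) ⟨u, huP, hadj.symm⟩)
        · have := hQ.2.2.2 u hu v hv hadj
          rwa [hval' u huP, hval' v (hdis v hv)] at this
  · intro hQ
    by_cases hmeet : (P ∩ Q).Nonempty
    · have h1 : P ⊆ Q := max_subset hQ hP.2.1 hP.2.2.1 hmeet
      have hnb : ∀ u ∉ P, ∀ v ∈ P, ¬ G.Adj u v := by
        intro u hu v hv hadj
        have hlt : h v < h u := hP.2.2.2 u hu v hv hadj
        by_cases huQ : u ∈ Q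
        · exact absurd (hQ.2.2.1 u huQ v (h1 hv)) (ne_of_gt hlt)
        · exact lt_irrefl _ ((hQ.2.2.2 u huQ v (h1 hv) hadj).trans hlt)
      have h2 : Q ⊆ P := subset_of_no_boundary hQ.2.1 hnb
        ⟨hmeet.choose, hmeet.choose_spec.2, hmeet.choose_spec.1⟩
      have hQP : Q = P := le_antisymm h2 h1
      subst hQP
      exact ⟨hP.1, hP.2.1, hconstP, fun u hu v hv hadj => absurd hadj (hnb u hu v hv)⟩
    · have hdis : ∀ v ∈ Q, v ∉ P := fun v hvQ hvP => hmeet ⟨v, hvP, hvQ⟩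
      refine ⟨hQ.1, hQ.2.1, ?_, ?_⟩
      · intro u hu v hv
        rw [hval' u (hdis u hu), hval' v (hdis v hv)]
        exact hQ.2.2.1 u hu v hv
      · intro u hu v hv hadj
        by_cases huP : u ∈ P
        · rw [hval u huP, hval' v (hdis v hv)]
          exact hc2 v (hdis v hv) ⟨u, huP, hadj.symm⟩
        · rw [hval' u huP, hval' v (hdis v hv)]
          exact hQ.2.2.2 u hu v hv hadj

open Classical in
theorem stmt4 [Fintype V] (G : SimpleGraph V) (h : V → ℝ) (P : Set V)
    (hP : IsMinPlateau G h P) (c : ℝ)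
    (hc1 : ∀ v ∈ P, h v < c)
    (hc2 : ∀ u ∉ P, (∃ v ∈ P, G.Adj u v) → c < h u) :
    {Q : Set V | IsMinPlateau G (fun v => if v ∈ P then c else h v) Q} =
      {Q : Set V | IsMinPlateau G h Q} ∧
    {Q : Set V | IsMaxPlateau G (fun v => if v ∈ P then c else h v) Q} =
      {Q : Set V | IsMaxPlateau G h Q} ∧
    locmin G (fun v => if v ∈ P then c else h v) = locmin G h ∧
    locmax G (fun v => if v ∈ P then c else h v) = locmax G h := by
  have e1 : {Q : Set V | IsMinPlateau G (fun v => if v ∈ P then c else h v) Q} =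
      {Q : Set V | IsMinPlateau G h Q} := by
    ext Q
    exact min_iff G h P hP c hc1 hc2 Q
  have e2 : {Q : Set V | IsMaxPlateau G (fun v => if v ∈ P then c else h v) Q} =
      {Q : Set V | IsMaxPlateau G h Q} := by
    ext Q
    exact max_iff G h P hP c hc1 hc2 Q
  exact ⟨e1, e2, by rw [locmin, locmin, e1], by rw [locmax, locmax, e2]⟩
end

section
/- Fix an integer k ≥ 1 and let G be the graph with vertex set {w₁, w₂} ∪ R ∪ B, where |R| = |B| = k, R, B, {w₁, w₂} are pairwise disjoint, and the edge set consists exactly of all pairs {r, wᵢ} for r ∈ R, i ∈ {1,2} and all pairs {b, wᵢ} for b ∈ B, i ∈ {1,2}. Consider any coloring c of the vertices by {red, blue} with c(r) = red for all r ∈ R and c(b) = blue for all b ∈ B. If c(w₁) ≠ c(w₂), then the red vertices induce a connected subgraph and the blue vertices induce a connected subgraph (so there are exactly 2 monochromatic components). If c(w₁) = c(w₂) = red, then the blue vertices induce exactly k connected components (and symmetrically if both are blue). -/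
open SimpleGraph

variable {V : Type*}

/-- The inverter gadget: two white vertices `w₁, w₂` (the `Fin 2` part),
`k` red vertices and `k` blue vertices, each colored vertex adjacent to both
white vertices, and no other edges. -/
def gadget (k : ℕ) : SimpleGraph (Fin 2 ⊕ (Fin k ⊕ Fin k)) :=
  SimpleGraph.fromRel (fun x y =>
    match x, y with
    | Sum.inl _, Sum.inr _ => True
    | _, _ => False)

/-! If the two white vertices get different colours, each colour class is a star centred at the
white vertex of that colour; if both get colour `!b`, the colour class `b` consists of `k`
pairwise non-adjacent coloured vertices. -/

namespace SimpleGraph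

variable {G : SimpleGraph V}

theorem induce_connected_of_forall_adj {s : Set V} {a : V} (ha : a ∈ s)
    (hadj : ∀ v ∈ s, v ≠ a → G.Adj v a) : (G.induce s).Connected := by
  rw [connected_iff_exists_forall_reachable]
  refine ⟨⟨a, ha⟩, fun ⟨v, hv⟩ => ?_⟩
  by_cases hva : v = a
  · subst hva
    rfl
  · exact (Adj.reachable (show (G.induce s).Adj ⟨v, hv⟩ ⟨a, ha⟩ from hadj v hv hva)).symm

theorem card_connectedComponent_bot :
    Nat.card (⊥ : SimpleGraph V).ConnectedComponent = Nat.card V := by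
  refine (Nat.card_eq_of_bijective (⊥ : SimpleGraph V).connectedComponentMk
    ⟨fun u v huv => ?_, fun C => C.exists_rep⟩).symm
  exact reachable_bot.mp (ConnectedComponent.exact huv)

end SimpleGraph

section Gadget

variable {k : ℕ}

theorem gadget_adj_inr_inl (z : Fin k ⊕ Fin k) (i : Fin 2) :
    (gadget k).Adj (Sum.inr z) (Sum.inl i) := by
  simp [gadget]

@[simp]
theorem gadget_not_adj_inr_inr (z z' : Fin k ⊕ Fin k) :
    ¬ (gadget k).Adj (Sum.inr z) (Sum.inr z') := by
  simp [gadget]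

theorem gadget_induce_colorClass_connected {c : Fin 2 ⊕ (Fin k ⊕ Fin k) → Bool}
    (hc : c (Sum.inl 0) ≠ c (Sum.inl 1)) (b : Bool) :
    ((gadget k).induce {v | c v = b}).Connected := by
  obtain ⟨i, hi, hj⟩ : ∃ i, c (Sum.inl i) = b ∧ ∀ j, c (Sum.inl j) = b → j = i := by
    by_cases h0 : c (Sum.inl 0) = b
    · refine ⟨0, h0, Fin.forall_fin_two.mpr ⟨fun _ => rfl, fun h1 => ?_⟩⟩
      exact absurd (h0.trans h1.symm) hc
    · have h1 : c (Sum.inl 1) = b := by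
        revert hc h0; cases c (Sum.inl 0) <;> cases c (Sum.inl 1) <;> cases b <;> simp
      exact ⟨1, h1, Fin.forall_fin_two.mpr ⟨fun h0' => absurd h0' h0, fun _ => rfl⟩⟩
  refine induce_connected_of_forall_adj (a := Sum.inl i) hi ?_
  rintro (j | z) hv hne
  · exact absurd (congrArg Sum.inl (hj j hv)) hne
  · exact gadget_adj_inr_inl z i

theorem gadget_card_connectedComponent_induce_colorClass {c : Fin 2 ⊕ (Fin k ⊕ Fin k) → Bool}
    {b : Bool} (h0 : c (Sum.inl 0) ≠ b) (h1 : c (Sum.inl 1) ≠ b) :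
    Nat.card ((gadget k).induce {v | c v = b}).ConnectedComponent =
      Nat.card {z | c (Sum.inr z) = b} := by
  have hclass : {v | c v = b} = Sum.inr '' {z | c (Sum.inr z) = b} := by
    ext (j | z)
    · fin_cases j <;> simpa
    · simp
  have hbot : (gadget k).induce {v | c v = b} = ⊥ := by
    ext ⟨u, hu⟩ ⟨v, hv⟩
    rw [hclass] at hu hv
    obtain ⟨z, -, rfl⟩ := hu
    obtain ⟨z', -, rfl⟩ := hv
    simp
  rw [hbot, card_connectedComponent_bot, hclass, Nat.card_image_of_injective Sum.inr_injective]

end Gadget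

theorem stmt13_general (k : ℕ)
    (c : Fin 2 ⊕ (Fin k ⊕ Fin k) → Bool)
    (hR : ∀ r : Fin k, c (Sum.inr (Sum.inl r)) = true)
    (hB : ∀ b : Fin k, c (Sum.inr (Sum.inr b)) = false) :
    (c (Sum.inl 0) ≠ c (Sum.inl 1) →
      ((gadget k).induce {v | c v = true}).Connected ∧
      ((gadget k).induce {v | c v = false}).Connected) ∧
    (c (Sum.inl 0) = true → c (Sum.inl 1) = true →
      Nat.card ((gadget k).induce {v | c v = false}).ConnectedComponent = k) ∧
    (c (Sum.inl 0) = false → c (Sum.inl 1) = false →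
      Nat.card ((gadget k).induce {v | c v = true}).ConnectedComponent = k) := by
  have hred : {z | c (Sum.inr z) = true} = Set.range Sum.inl := by
    ext (r | b) <;> simp [hR, hB]
  have hblue : {z | c (Sum.inr z) = false} = Set.range Sum.inr := by
    ext (r | b) <;> simp [hR, hB]
  refine ⟨fun hc => ⟨gadget_induce_colorClass_connected hc true,
    gadget_induce_colorClass_connected hc false⟩, fun h0 h1 => ?_, fun h0 h1 => ?_⟩
  · rw [gadget_card_connectedComponent_induce_colorClass (by simp [h0]) (by simp [h1]), hblue,
      Nat.card_range_of_injective Sum.inr_injective, Nat.card_fin]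
  · rw [gadget_card_connectedComponent_induce_colorClass (by simp [h0]) (by simp [h1]), hred,
      Nat.card_range_of_injective Sum.inl_injective, Nat.card_fin]

theorem stmt13 (k : ℕ) (hk : 1 ≤ k)
    (c : Fin 2 ⊕ (Fin k ⊕ Fin k) → Bool)
    (hR : ∀ r : Fin k, c (Sum.inr (Sum.inl r)) = true)
    (hB : ∀ b : Fin k, c (Sum.inr (Sum.inr b)) = false) :
    (c (Sum.inl 0) ≠ c (Sum.inl 1) →
      ((gadget k).induce {v | c v = true}).Connected ∧
      ((gadget k).induce {v | c v = false}).Connected) ∧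
    (c (Sum.inl 0) = true → c (Sum.inl 1) = true →
      Nat.card ((gadget k).induce {v | c v = false}).ConnectedComponent = k) ∧
    (c (Sum.inl 0) = false → c (Sum.inl 1) = false →
      Nat.card ((gadget k).induce {v | c v = true}).ConnectedComponent = k) :=
  stmt13_general k c hR hB
end

section
/- Let G be a finite simple graph whose vertex set is partitioned into R, B, W, and define interval bounds lo, hi by lo(v) = hi(v) = 5 for v ∈ R, lo(v) = hi(v) = 1 for v ∈ B, and lo(v) = 1, hi(v) = 5 for v ∈ W. Suppose every connected component of G contains a vertex of R and a vertex of B. Then for every realization T : V(G) → ℝ with all values in {1, 5} (lo ≤ T ≤ hi pointwise), the total number of local extremum plateaus of T (local-minimum plateaus plus local-maximum plateaus) equals the number of monochromatic components of the two-coloring assigning color 'blue' to T⁻¹({1}) and 'red' to T⁻¹({5}). -/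
open SimpleGraph

variable {V : Type*}

/-- Transfer a walk in one induced subgraph to reachability in another induced
subgraph containing all its vertices. -/
lemma reach_transfer {G : SimpleGraph V} {A B : Set V} :
    ∀ {u v : ↥A} (w : (G.induce A).Walk u v) (hw : ∀ x ∈ w.support, x.val ∈ B),
      (G.induce B).Reachable ⟨u.val, hw u w.start_mem_support⟩
        ⟨v.val, hw v w.end_mem_support⟩ := by
  intro u v w
  induction w with
  | nil => intro hw; exact Reachable.refl _
  | @cons u b v hadj p ih =>
      intro hw
      have hb : b.val ∈ B := hw b (by simp)
      have h1 : (G.induce B).Adj ⟨u.val, hw u (by simp)⟩ ⟨b.val, hb⟩ := hadj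
      have h2 := ih (fun x hx => hw x (by simp [hx]))
      exact h1.reachable.trans (by convert h2 using 2)

lemma mem_of_walk_closed_induce {G : SimpleGraph V} {S P : Set V}
    (hcl : ∀ x ∈ P, ∀ y ∈ S, G.Adj x y → y ∈ P) :
    ∀ {u v : ↥S} (_ : (G.induce S).Walk u v), u.val ∈ P → v.val ∈ P := by
  intro u v w
  induction w with
  | nil => exact id
  | @cons u b v hadj p ih =>
      intro hu
      exact ih (hcl u.val hu b.val b.2 hadj)

lemma mem_of_walk_closed {G : SimpleGraph V} {P : Set V}
    (hcl : ∀ x ∈ P, ∀ y, G.Adj x y → y ∈ P) :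
    ∀ {u v : V} (_ : G.Walk u v), u ∈ P → v ∈ P := by
  intro u v w
  induction w with
  | nil => exact id
  | @cons u b v hadj p ih => intro hu; exact ih (hcl u hu b hadj)

lemma supp_mem_of_walk {H : SimpleGraph V} {u v : V} (w : H.Walk u v) :
    ∀ x ∈ w.support, H.Reachable u x := by
  induction w with
  | nil => intro x hx; simp at hx; subst hx; exact Reachable.refl _
  | @cons u b v hadj p ih =>
      intro x hx
      rcases List.mem_cons.mp (by simpa using hx) with h | h
      · subst h; exact Reachable.refl _
      · exact hadj.reachable.trans (ih x h)

/-- The key lemma: min plateaus are exactly (images of) connected components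
of the induced subgraph on the lower level set. -/
lemma locmin_eq (G : SimpleGraph V) (h : V → ℝ) (a b : ℝ) (hab : a < b)
    (hval : ∀ v, h v = a ∨ h v = b)
    (hcomp : ∀ v : V, ∃ w, G.Reachable v w ∧ h w = a) :
    {P : Set V | IsMinPlateau G h P} =
      Set.range (fun c : (G.induce {v | h v = a}).ConnectedComponent =>
        Subtype.val '' c.supp) := by
  set S : Set V := {v | h v = a} with hS
  ext P
  constructor
  · rintro ⟨⟨v₀, hv₀⟩, hconn, hconst, hnbr⟩
    -- value of the plateau
    rcases hval v₀ with hv1 | hv5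
    · -- value a : P is a component of induce S
      have hPS : P ⊆ S := fun x hx => by
        have := hconst x hx v₀ hv₀; simp only [hS, Set.mem_setOf_eq]; rw [this, hv1]
      refine ⟨(G.induce S).connectedComponentMk ⟨v₀, hPS hv₀⟩, ?_⟩
      ext x
      simp only [Set.mem_image, ConnectedComponent.mem_supp_iff]
      constructor
      · rintro ⟨⟨y, hyS⟩, hy, rfl⟩
        -- y in supp of the component: reachable from v₀ in induce S
        have hreach : (G.induce S).Reachable ⟨v₀, hPS hv₀⟩ ⟨y, hyS⟩ := by
          have := ConnectedComponent.exact (hy.symm ▸ rfl :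
            (G.induce S).connectedComponentMk ⟨y, hyS⟩ =
            (G.induce S).connectedComponentMk ⟨v₀, hPS hv₀⟩)
          exact this.symm
        obtain ⟨w⟩ := hreach
        -- closure of P inside S
        have hcl : ∀ x ∈ P, ∀ z ∈ S, G.Adj x z → z ∈ P := by
          intro x hx z hz hadj
          by_contra hzP
          have := hnbr z hzP x hx hadj.symm
          have hxa : h x = a := hPS hx
          have hza : h z = a := hz
          rw [hxa, hza] at this; exact lt_irrefl a this
        exact mem_of_walk_closed_induce hcl w hv₀
      · intro hx
        -- x ∈ P; show it maps into the component
        refine ⟨⟨x, hPS hx⟩, ?_, rfl⟩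
        -- reachable from v₀ within induce P, transfer to induce S
        obtain ⟨w⟩ := hconn.preconnected ⟨v₀, hv₀⟩ ⟨x, hx⟩
        have hr := reach_transfer (B := S) w (fun z _ => hPS z.2)
        exact (ConnectedComponent.sound hr).symm
    · -- value b : impossible
      exfalso
      have hcl : ∀ x ∈ P, ∀ y, G.Adj x y → y ∈ P := by
        intro x hx y hadj
        by_contra hyP
        have := hnbr y hyP x hx hadj.symm
        have hxb : h x = b := by rw [hconst x hx v₀ hv₀, hv5]
        rcases hval y with hy | hy <;> rw [hxb, hy] at this <;> linarith
      obtain ⟨z, hz, hza⟩ := hcomp v₀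
      obtain ⟨w⟩ := hz
      have hzP := mem_of_walk_closed hcl w hv₀
      have : h z = b := by rw [hconst z hzP v₀ hv₀, hv5]
      rw [hza] at this; linarith
  · rintro ⟨c, rfl⟩
    obtain ⟨⟨v₀, hv₀S⟩, hv₀⟩ := c.exists_rep
    have hv₀supp : (⟨v₀, hv₀S⟩ : ↥S) ∈ c.supp := by
      rw [ConnectedComponent.mem_supp_iff]; exact hv₀
    refine ⟨⟨v₀, ⟨v₀, hv₀S⟩, hv₀supp, rfl⟩, ?_, ?_, ?_⟩
    · -- connectivity
      rw [connected_iff]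
      refine ⟨?_, ⟨⟨v₀, ⟨v₀, hv₀S⟩, hv₀supp, rfl⟩⟩⟩
      rintro ⟨x, hx⟩ ⟨y, hy⟩
      obtain ⟨⟨x', hx'S⟩, hx'c, hx'v⟩ := hx
      obtain ⟨⟨y', hy'S⟩, hy'c, hy'v⟩ := hy
      rw [ConnectedComponent.mem_supp_iff] at hx'c hy'c
      have hreach : (G.induce S).Reachable ⟨x', hx'S⟩ ⟨y', hy'S⟩ :=
        ConnectedComponent.exact (hx'c.trans hy'c.symm)
      obtain ⟨w⟩ := hreach
      have hw : ∀ z ∈ w.support, z.val ∈ Subtype.val '' c.supp := by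
        intro z hz
        refine ⟨z, ?_, rfl⟩
        rw [ConnectedComponent.mem_supp_iff]
        have := supp_mem_of_walk w z hz
        rw [← (ConnectedComponent.sound this), hx'c]
      have hr := reach_transfer (B := Subtype.val '' c.supp) w hw
      subst hx'v; subst hy'v
      convert hr using 2
    · -- constant
      rintro u ⟨⟨u', hu'S⟩, _, rfl⟩ v ⟨⟨v', hv'S⟩, _, rfl⟩
      have : h u' = a := hu'S
      have h2 : h v' = a := hv'S
      simp only [this, h2]
    · -- outside neighbors strictly higher
      rintro u hu v ⟨⟨v', hv'S⟩, hv'c, rfl⟩ hadj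
      have hv'a : h v' = a := hv'S
      rcases hval u with hua | hub
      · exfalso
        apply hu
        refine ⟨⟨u, hua⟩, ?_, rfl⟩
        rw [ConnectedComponent.mem_supp_iff] at hv'c ⊢
        have hadj' : (G.induce S).Adj ⟨u, hua⟩ ⟨v', hv'S⟩ := hadj
        rw [← hv'c]
        exact ConnectedComponent.sound hadj'.reachable
      · rw [hv'a, hub]; exact hab

lemma supp_image_injective {W : Type*} (H : SimpleGraph W) (S : Set W) :
    Function.Injective (fun c : (H.induce S).ConnectedComponent =>
      Subtype.val '' c.supp) := by
  intro c d hcd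
  obtain ⟨x, hx⟩ := c.exists_rep
  have hxc : x ∈ c.supp := by rw [ConnectedComponent.mem_supp_iff]; exact hx
  simp only at hcd
  have hmem : x.val ∈ Subtype.val '' d.supp := by rw [← hcd]; exact ⟨x, hxc, rfl⟩
  obtain ⟨y, hy, hyx⟩ := hmem
  have hyx' : y = x := Subtype.ext hyx
  rw [ConnectedComponent.mem_supp_iff] at hy
  rw [← hx, ← hy, hyx']; rfl

lemma locmin_card (G : SimpleGraph V) [Fintype V] (h : V → ℝ) (a b : ℝ) (hab : a < b)
    (hval : ∀ v, h v = a ∨ h v = b)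
    (hcomp : ∀ v : V, ∃ w, G.Reachable v w ∧ h w = a) :
    locmin G h = Nat.card (G.induce {v | h v = a}).ConnectedComponent := by
  unfold locmin
  rw [locmin_eq G h a b hab hval hcomp, ← Set.image_univ,
    Set.ncard_image_of_injective _ (supp_image_injective G _), Set.ncard_univ]

theorem stmt14 [Fintype V] (G : SimpleGraph V) (R B W : Set V)
    (hRB : Disjoint R B) (hRW : Disjoint R W) (hBW : Disjoint B W)
    (hcover : R ∪ B ∪ W = Set.univ)
    (hcomp : ∀ c : G.ConnectedComponent,
      (∃ v ∈ c.supp, v ∈ R) ∧ (∃ v ∈ c.supp, v ∈ B))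
    (T : V → ℝ) (hT : ∀ v, T v = 1 ∨ T v = 5)
    (hTR : ∀ v ∈ R, T v = 5) (hTB : ∀ v ∈ B, T v = 1) :
    locmin G T + locmax G T =
      Nat.card (G.induce {v | T v = 1}).ConnectedComponent +
        Nat.card (G.induce {v | T v = 5}).ConnectedComponent := by
  have hmin : locmin G T = Nat.card (G.induce {v | T v = 1}).ConnectedComponent := by
    apply locmin_card G T 1 5 (by norm_num) hT
    intro v
    obtain ⟨_, ⟨w, hw, hwB⟩⟩ := hcomp (G.connectedComponentMk v)
    rw [ConnectedComponent.mem_supp_iff] at hw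
    exact ⟨w, (ConnectedComponent.exact hw).symm, hTB w hwB⟩
  have hmaxmin : {P : Set V | IsMaxPlateau G T P} =
      {P : Set V | IsMinPlateau G (fun v => -(T v)) P} := by
    ext P
    simp only [Set.mem_setOf_eq, IsMaxPlateau, IsMinPlateau]
    constructor
    · rintro ⟨h1, h2, h3, h4⟩
      exact ⟨h1, h2, fun u hu v hv => by rw [h3 u hu v hv],
        fun u hu v hv hadj => by have := h4 u hu v hv hadj; linarith⟩
    · rintro ⟨h1, h2, h3, h4⟩
      refine ⟨h1, h2, fun u hu v hv => ?_, fun u hu v hv hadj => ?_⟩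
      · have := h3 u hu v hv; linarith
      · have := h4 u hu v hv hadj; linarith
  have hset : {v | -(T v) = -5} = {v | T v = 5} := by
    ext v; simp only [Set.mem_setOf_eq]; constructor <;> intro h <;> linarith
  have hmax : locmax G T = Nat.card (G.induce {v | T v = 5}).ConnectedComponent := by
    unfold locmax
    rw [hmaxmin]
    have := locmin_card G (fun v => -(T v)) (-5) (-1) (by norm_num)
      (fun v => by rcases hT v with h | h <;> [right; left] <;> simp [h])
      ?_
    · unfold locmin at this
      rw [this, hset]
    · intro v
      obtain ⟨⟨w, hw, hwR⟩, _⟩ := hcomp (G.connectedComponentMk v)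
      rw [ConnectedComponent.mem_supp_iff] at hw
      exact ⟨w, (ConnectedComponent.exact hw).symm, by simp [hTR w hwR]⟩
  rw [hmin, hmax]
end
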